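/- For every positive natural number L, define X(L) = Σ_j (-1)^j q^(2j²-j) [2L choose L-2j]_q. Then X(L) = (1+q^L) ∏_{k=1}^{L-1} (1+q^(2k)); in particular X(L) has nonnegative coefficients. -/

import Mathlib

/-!
Write `qbinSum n c e = S(n, c, e) = ∑ⱼ (-1)^j q^(2j² + ej) [n, c - 2j]`, so that the sum in
question is `S(2m+2, m+1, -1)` with `L = m + 1`. The two `q`-Pascal rules for `[n+1, k]` and the symmetry
`[n, k] = [n, n - k]` (under `j ↦ -j`), together with the shift `j ↦ j - 1`, give linear relations
between these sums. With `Dₘ = S(2m+1, m, 1)` they yield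
`S(2m+2, m+1, -1) = (1 + q^(m+1)) Dₘ` and `S(2m+2, m, 1) = (1 - q^(m+1)) Dₘ`, and one more Pascal
step combines the two into `Dₘ₊₁ = (1 + q^(2m+2)) Dₘ`, while `D₀ = 1`. The product has nonnegative
coefficients because it is the image of an element of `ℕ[ℤ]`.
-/

open LaurentPolynomial Finset

noncomputable section

/-- Gaussian binomial coefficient with natural indices, in base `x`, defined by the
`q`-Pascal recurrence `[n+1, k+1] = [n, k] + x^(k+1) * [n, k+1]`.  It vanishes for `k > n`. -/
def gaussAux (x : LaurentPolynomial ℤ) : ℕ → ℕ → LaurentPolynomial ℤ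
  | _, 0 => 1
  | 0, _ + 1 => 0
  | n + 1, k + 1 => gaussAux x n k + x ^ (k + 1) * gaussAux x n (k + 1)

/-- The Gaussian binomial coefficient `[n choose k]` in base `x`, for integer indices:
it is zero when `n < 0` or `k < 0` (and, by `gaussAux`, also when `k > n`). -/
def qbin (x : LaurentPolynomial ℤ) (n k : ℤ) : LaurentPolynomial ℤ :=
  if 0 ≤ n ∧ 0 ≤ k then gaussAux x n.toNat k.toNat else 0

/-- `(-1)^j` for an integer `j`, as a Laurent polynomial. -/
def m1 (j : ℤ) : LaurentPolynomial ℤ := ((((-1 : ℤˣ) ^ j : ℤˣ) : ℤ) : LaurentPolynomial ℤ)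

lemma gaussAux_zero_right (x : LaurentPolynomial ℤ) (n : ℕ) : gaussAux x n 0 = 1 := by
  cases n <;> rfl

lemma gaussAux_eq_zero_of_lt (x : LaurentPolynomial ℤ) : ∀ {n k : ℕ}, n < k → gaussAux x n k = 0
  | 0, _ + 1, _ => rfl
  | n + 1, k + 1, h => by
    rw [gaussAux, gaussAux_eq_zero_of_lt x (by omega : n < k),
      gaussAux_eq_zero_of_lt x (by omega : n < k + 1), mul_zero, add_zero]

lemma qbin_eq_zero_of_neg (x : LaurentPolynomial ℤ) (n : ℤ) {k : ℤ} (hk : k < 0) :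
    qbin x n k = 0 :=
  if_neg (by omega)

lemma qbin_eq_zero_of_lt (x : LaurentPolynomial ℤ) {n k : ℤ} (h : n < k) : qbin x n k = 0 := by
  unfold qbin
  split_ifs
  · exact gaussAux_eq_zero_of_lt x (by omega)
  · rfl

lemma qbin_natCast (x : LaurentPolynomial ℤ) (n k : ℕ) : qbin x n k = gaussAux x n k := by
  simp [qbin]

lemma qbin_zero_right (x : LaurentPolynomial ℤ) {n : ℤ} (hn : 0 ≤ n) : qbin x n 0 = 1 := by
  rw [qbin, if_pos ⟨hn, le_rfl⟩, Int.toNat_zero, gaussAux_zero_right]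

lemma qbin_zero_left (x : LaurentPolynomial ℤ) (k : ℤ) : qbin x 0 k = if k = 0 then 1 else 0 := by
  split_ifs with hk
  · exact hk ▸ qbin_zero_right x le_rfl
  · rcases lt_or_gt_of_ne hk with hk | hk
    · exact qbin_eq_zero_of_neg x 0 hk
    · exact qbin_eq_zero_of_lt x hk

lemma qbin_succ {n : ℤ} (hn : 0 ≤ n) (k : ℤ) :
    qbin (T 1) (n + 1) k = qbin (T 1) n (k - 1) + T k * qbin (T 1) n k := by
  lift n to ℕ using hn
  rcases lt_trichotomy k 0 with hk | rfl | hk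
  · simp [qbin_eq_zero_of_neg _ _ hk, qbin_eq_zero_of_neg _ _ (by omega : k - 1 < 0)]
  · rw [qbin_zero_right _ (by omega), qbin_zero_right _ (by omega),
      qbin_eq_zero_of_neg _ _ (by norm_num : (0 : ℤ) - 1 < 0), T_zero, zero_add, one_mul]
  · obtain ⟨m, rfl⟩ : ∃ m : ℕ, k = m + 1 := ⟨(k - 1).toNat, by omega⟩
    have hsucc := qbin_natCast (T 1) (n + 1) (m + 1)
    push_cast at hsucc
    rw [hsucc, gaussAux, add_sub_cancel_right, qbin_natCast, ← Nat.cast_succ, qbin_natCast, T_pow,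
      mul_one]

lemma qbin_succ' {n : ℤ} (hn : 0 ≤ n) (k : ℤ) :
    qbin (T 1) (n + 1) k = T (n + 1 - k) * qbin (T 1) n (k - 1) + qbin (T 1) n k := by
  induction n, hn using Int.leInduction generalizing k with
  | base =>
    have h := qbin_succ le_rfl k
    rw [zero_add] at h
    rw [zero_add, h, qbin_zero_left, qbin_zero_left]
    rcases eq_or_ne k 1 with rfl | hk1
    · simp
    · by_cases hk : k = 0 <;> simp [hk, hk1, sub_eq_zero]
  | succ n hn ih =>
    rw [qbin_succ (by omega)]
    conv_lhs => rw [ih, ih]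
    conv_rhs => rw [qbin_succ hn, qbin_succ hn]
    rw [show n + 1 - (k - 1) = n + 1 + 1 - k by ring]
    have h1 : (T k : LaurentPolynomial ℤ) * T (n + 1 - k) = T (n + 1) := by rw [← T_add]; ring_nf
    have h2 : (T (n + 1 + 1 - k) : LaurentPolynomial ℤ) * T (k - 1) = T (n + 1) := by
      rw [← T_add]; ring_nf
    linear_combination qbin (T 1) n (k - 1) * (h1 - h2)

lemma qbin_symm {n : ℤ} (hn : 0 ≤ n) (k : ℤ) : qbin (T 1) n k = qbin (T 1) n (n - k) := by
  induction n, hn using Int.leInduction generalizing k with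
  | base => simp [qbin_zero_left, neg_eq_zero]
  | succ n hn ih =>
    rw [qbin_succ hn, qbin_succ' hn, ih, ih k, show n + 1 - (n + 1 - k) = k by ring,
      show n + 1 - k - 1 = n - k by ring, show n - (k - 1) = n + 1 - k by ring, add_comm]

lemma m1_neg (j : ℤ) : m1 (-j) = m1 j := by
  rw [m1, zpow_neg, Int.units_inv_eq_self, m1]

lemma m1_sub_one (j : ℤ) : m1 (j - 1) = -m1 j := by
  simp only [m1, zpow_sub_one, Int.units_inv_eq_self, Units.val_mul, Units.val_neg, Units.val_one]
  push_cast
  ring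

def qbinTerm (n c e j : ℤ) : LaurentPolynomial ℤ :=
  m1 j * T (2 * j ^ 2 + e * j) * qbin (T 1) n (c - 2 * j)

def qbinSum (n c e : ℤ) : LaurentPolynomial ℤ :=
  ∑ᶠ j, qbinTerm n c e j

lemma hasFiniteSupport_qbinTerm (n c e : ℤ) : Function.HasFiniteSupport (qbinTerm n c e) := by
  refine (Set.finite_Icc ((c - n) / 2) (c / 2)).subset fun j hj => ?_
  by_contra hout
  apply hj
  rw [qbinTerm]
  rcases not_and_or.mp (Set.mem_Icc.not.mp hout) with h | h
  · rw [qbin_eq_zero_of_lt _ (by omega), mul_zero]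
  · rw [qbin_eq_zero_of_neg _ _ (by omega), mul_zero]

lemma qbinSum_succ {n : ℤ} (hn : 0 ≤ n) (c e : ℤ) :
    qbinSum (n + 1) c e = qbinSum n (c - 1) e + T c * qbinSum n c (e - 2) := by
  rw [qbinSum, qbinSum, qbinSum, mul_finsum, ← finsum_add_distrib (hasFiniteSupport_qbinTerm _ _ _)
    ((hasFiniteSupport_qbinTerm _ _ _).fun_mul_right _)]
  refine finsum_congr fun j => ?_
  have hT : (T c : LaurentPolynomial ℤ) * T (2 * j ^ 2 + (e - 2) * j)
      = T (2 * j ^ 2 + e * j) * T (c - 2 * j) := by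
    rw [← T_add, ← T_add]; ring_nf
  rw [qbinTerm, qbinTerm, qbinTerm, qbin_succ hn, sub_right_comm]
  linear_combination m1 j * qbin (T 1) n (c - 2 * j) * hT.symm

lemma qbinSum_succ' {n : ℤ} (hn : 0 ≤ n) (c e : ℤ) :
    qbinSum (n + 1) c e = T (n + 1 - c) * qbinSum n (c - 1) (e + 2) + qbinSum n c e := by
  rw [qbinSum, qbinSum, qbinSum, mul_finsum, ← finsum_add_distrib
    ((hasFiniteSupport_qbinTerm _ _ _).fun_mul_right _) (hasFiniteSupport_qbinTerm _ _ _)]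
  refine finsum_congr fun j => ?_
  have hT : (T (n + 1 - c) : LaurentPolynomial ℤ) * T (2 * j ^ 2 + (e + 2) * j)
      = T (2 * j ^ 2 + e * j) * T (n + 1 - (c - 2 * j)) := by
    rw [← T_add, ← T_add]; ring_nf
  rw [qbinTerm, qbinTerm, qbinTerm, qbin_succ' hn, sub_right_comm]
  linear_combination m1 j * qbin (T 1) n (c - 1 - 2 * j) * hT.symm

lemma qbinSum_reflect {n : ℤ} (hn : 0 ≤ n) (c e : ℤ) :
    qbinSum n c e = qbinSum n (n - c) (-e) := by
  rw [qbinSum, ← finsum_comp_equiv (Equiv.neg ℤ), qbinSum]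
  refine finsum_congr fun j => ?_
  rw [Equiv.neg_apply, qbinTerm, qbinTerm, m1_neg, qbin_symm hn]
  ring_nf

lemma qbinSum_shift (n c e : ℤ) : qbinSum n c e = -(T (2 - e) * qbinSum n (c + 2) (e - 4)) := by
  rw [qbinSum, ← finsum_comp_equiv (Equiv.subRight (1 : ℤ)), qbinSum, mul_finsum,
    ← finsum_neg_distrib]
  refine finsum_congr fun j => ?_
  have hT : (T (2 * (j - 1) ^ 2 + e * (j - 1)) : LaurentPolynomial ℤ)
      = T (2 - e) * T (2 * j ^ 2 + (e - 4) * j) := by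
    rw [← T_add]; ring_nf
  rw [Equiv.subRight_apply, qbinTerm, qbinTerm, m1_sub_one, hT,
    show c - 2 * (j - 1) = c + 2 - 2 * j by ring]
  ring

lemma qbinSum_odd_reflect {m : ℤ} (hm : 0 ≤ m) :
    qbinSum (2 * m + 1) (m + 1) (-1) = qbinSum (2 * m + 1) m 1 := by
  rw [qbinSum_reflect (by omega)]
  congr 1; ring

lemma qbinSum_even_center_eq {m : ℤ} (hm : 0 ≤ m) :
    qbinSum (2 * m + 2) (m + 1) (-1) = (1 + T (m + 1)) * qbinSum (2 * m + 1) m 1 := by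
  rw [show 2 * m + 2 = 2 * m + 1 + 1 by ring, qbinSum_succ' (by omega), qbinSum_odd_reflect hm,
    show 2 * m + 1 + 1 - (m + 1) = m + 1 by ring, add_sub_cancel_right,
    show (-1 : ℤ) + 2 = 1 by norm_num]
  ring

lemma qbinSum_even_off_center_eq {m : ℤ} (hm : 0 ≤ m) :
    qbinSum (2 * m + 2) m 1 = (1 - T (m + 1)) * qbinSum (2 * m + 1) m 1 := by
  have hT : (T (2 * m + 1 + 1 - m) : LaurentPolynomial ℤ) * T (2 - 3) = T (m + 1) := by
    rw [← T_add]; ring_nf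
  rw [show 2 * m + 2 = 2 * m + 1 + 1 by ring, qbinSum_succ' (by omega), qbinSum_shift,
    show m - 1 + 2 = m + 1 by ring, show (1 : ℤ) + 2 - 4 = -1 by norm_num,
    show (1 : ℤ) + 2 = 3 by norm_num, qbinSum_odd_reflect hm]
  linear_combination (-qbinSum (2 * m + 1) m 1) * hT

lemma qbinSum_odd_center_succ {m : ℤ} (hm : 0 ≤ m) :
    qbinSum (2 * m + 3) (m + 1) 1 = (1 + T (2 * (m + 1))) * qbinSum (2 * m + 1) m 1 := by
  have hT : (T (m + 1) : LaurentPolynomial ℤ) * T (m + 1) = T (2 * (m + 1)) := by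
    rw [← T_add]; ring_nf
  rw [show 2 * m + 3 = 2 * m + 2 + 1 by ring, qbinSum_succ (by omega), add_sub_cancel_right,
    show (1 : ℤ) - 2 = -1 by norm_num, qbinSum_even_center_eq hm, qbinSum_even_off_center_eq hm]
  linear_combination qbinSum (2 * m + 1) m 1 * hT

lemma qbinSum_odd_center_eq_prod (M : ℕ) :
    qbinSum (2 * M + 1) M 1 = ∏ k ∈ Icc 1 M, (1 + T (2 * (k : ℤ))) := by
  induction M with
  | zero =>
    rw [qbinSum, finsum_eq_single _ 0]
    · simp [qbinTerm, m1, qbin_zero_right]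
    · intro j hj
      rcases lt_or_gt_of_ne hj with h | h
      · rw [qbinTerm, qbin_eq_zero_of_lt _ (by omega), mul_zero]
      · rw [qbinTerm, qbin_eq_zero_of_neg _ _ (by omega), mul_zero]
  | succ M ih =>
    rw [prod_Icc_succ_top (by omega), ← ih]
    push_cast
    rw [show 2 * ((M : ℤ) + 1) + 1 = 2 * M + 3 by ring, qbinSum_odd_center_succ M.cast_nonneg,
      mul_comm]

lemma coeff_nonneg_of_mem_range_natCast {f : LaurentPolynomial ℤ}
    (hf : f ∈ (AddMonoidAlgebra.mapRingHom ℤ (Nat.castRingHom ℤ)).rangeS) (n : ℤ) :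
    0 ≤ (AddMonoidAlgebra.coeff f : ℤ →₀ ℤ) n := by
  obtain ⟨g, rfl⟩ := hf
  rw [AddMonoidAlgebra.coeff_mapRingHom]
  exact Int.natCast_nonneg _

lemma T_mem_range_natCast (a : ℤ) :
    T a ∈ (AddMonoidAlgebra.mapRingHom ℤ (Nat.castRingHom ℤ)).rangeS :=
  ⟨AddMonoidAlgebra.single a 1, by rw [AddMonoidAlgebra.mapRingHom_single, map_one]; rfl⟩

theorem stmt6 (L : ℕ) (hL : 0 < L) :
    (∑ᶠ j : ℤ, m1 j * T (2 * j ^ 2 - j) * qbin (T 1) (2 * L) (L - 2 * j)) =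
      (1 + T L) * ∏ k ∈ Finset.Icc 1 (L - 1), (1 + T (2 * (k : ℤ))) ∧
    ∀ n : ℤ, 0 ≤
      (AddMonoidAlgebra.coeff (∑ᶠ j : ℤ, m1 j * T (2 * j ^ 2 - j) * qbin (T 1) (2 * L) (L - 2 * j)) : ℤ →₀ ℤ) n := by
  obtain ⟨M, rfl⟩ : ∃ M : ℕ, L = M + 1 := ⟨L - 1, by omega⟩
  have hX : (∑ᶠ j : ℤ, m1 j * T (2 * j ^ 2 - j) * qbin (T 1) (2 * ((M + 1 : ℕ) : ℤ))
      ((M + 1 : ℕ) - 2 * j)) = qbinSum (2 * M + 2) (M + 1) (-1) :=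
    finsum_congr fun j => by rw [qbinTerm]; push_cast; ring_nf
  rw [hX, qbinSum_even_center_eq M.cast_nonneg, qbinSum_odd_center_eq_prod, Nat.add_sub_cancel]
  refine ⟨by push_cast; rfl, coeff_nonneg_of_mem_range_natCast ?_⟩
  exact mul_mem (add_mem (one_mem _) (T_mem_range_natCast _))
    (prod_mem fun _ _ => add_mem (one_mem _) (T_mem_range_natCast _))
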